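/- Finite convergence of Benders decomposition: in the abstract Benders scheme over a finite set Y of first-stage decisions, if at each iteration the added optimality cut is tight at the current first-stage point (g_t(y_t) = Q(y_t)), then the algorithm terminates with an optimal solution after at most |Y| iterations, since no first-stage point can be revisited without proving optimality. -/

import Mathlib

open Finset

/-!
Every cut is a lower bound on `Q`, so the master objective never exceeds `F = c + Q`. If the
master proposes a point `y a` already visited, the cut added at iteration `a` is tight there, so
the master objective equals `F` at the proposed point; being a master minimiser, that point then
minimises `F`. By pigeonhole, among `y 0, …, y |Y|` some point is revisited.
-/

noncomputable def masterObjective {Y : Type*} (c : Y → ℝ) (g : ℕ → Y → ℝ) (t : ℕ) (z : Y) : ℝ :=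
  c z + (range (t + 1)).sup' nonempty_range_add_one fun s => g s z

section Benders

variable {Y : Type*} {c Q : Y → ℝ} {g : ℕ → Y → ℝ}

theorem masterObjective_le (hvalid : ∀ s z, g s z ≤ Q z) (t : ℕ) (z : Y) :
    masterObjective c g t z ≤ c z + Q z :=
  add_le_add le_rfl (sup'_le _ _ fun s _ => hvalid s z)

theorem masterObjective_eq_of_tight (hvalid : ∀ s z, g s z ≤ Q z) {a t : ℕ} (hat : a ≤ t)
    {z : Y} (htight : g a z = Q z) : masterObjective c g t z = c z + Q z := by
  refine le_antisymm (masterObjective_le hvalid t z) (add_le_add le_rfl ?_)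
  exact htight ▸ le_sup' (fun s => g s z) (mem_range_succ_iff.mpr hat)

theorem le_of_masterObjective_eq {t : ℕ} {z : Y} (hvalid : ∀ s z, g s z ≤ Q z)
    (hmin : ∀ z', masterObjective c g t z ≤ masterObjective c g t z')
    (heq : masterObjective c g t z = c z + Q z) (z' : Y) : c z + Q z ≤ c z' + Q z' :=
  heq ▸ (hmin z').trans (masterObjective_le hvalid t z')

end Benders

theorem Fintype.exists_lt_le_card_map_eq {Y : Type*} [Fintype Y] (y : ℕ → Y) :
    ∃ a b, a < b ∧ b ≤ Fintype.card Y ∧ y a = y b := by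
  obtain ⟨i, j, hne, hij⟩ := Fintype.exists_ne_map_eq_of_card_lt
    (fun i : Fin (Fintype.card Y + 1) => y i) (by simp)
  rcases Fin.lt_or_lt_of_ne hne with h | h
  · exact ⟨i, j, h, Nat.lt_succ_iff.mp j.isLt, hij⟩
  · exact ⟨j, i, h, Nat.lt_succ_iff.mp i.isLt, hij.symm⟩

theorem stmt13_general {Y : Type*} [Fintype Y]
    (c Q : Y → ℝ) (g : ℕ → Y → ℝ) (y : ℕ → Y)
    (hvalid : ∀ s y', g s y' ≤ Q y')
    (htight : ∀ t, g t (y t) = Q (y t))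
    (hmaster : ∀ t, ∀ y' : Y,
      c (y (t + 1)) + (Finset.range (t + 1)).sup' Finset.nonempty_range_add_one
          (fun s => g s (y (t + 1))) ≤
        c y' + (Finset.range (t + 1)).sup' Finset.nonempty_range_add_one (fun s => g s y')) :
    ∃ t ≤ Fintype.card Y, ∀ y' : Y, c (y t) + Q (y t) ≤ c y' + Q y' := by
  obtain ⟨a, b, hab, hb, hy⟩ := Fintype.exists_lt_le_card_map_eq y
  obtain ⟨t, rfl⟩ : ∃ t, b = t + 1 := ⟨b - 1, by omega⟩
  have htight' : g a (y (t + 1)) = Q (y (t + 1)) := hy ▸ htight a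
  exact ⟨t + 1, hb, le_of_masterObjective_eq hvalid (hmaster t)
    (masterObjective_eq_of_tight hvalid (Nat.lt_succ_iff.mp hab) htight')⟩

theorem stmt13 {Y : Type*} [Fintype Y] [Nonempty Y]
    (c Q : Y → ℝ) (g : ℕ → Y → ℝ) (y : ℕ → Y)
    (hvalid : ∀ s y', g s y' ≤ Q y')
    (htight : ∀ t, g t (y t) = Q (y t))
    (hmaster : ∀ t, ∀ y' : Y,
      c (y (t + 1)) + (Finset.range (t + 1)).sup' Finset.nonempty_range_add_one
          (fun s => g s (y (t + 1))) ≤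
        c y' + (Finset.range (t + 1)).sup' Finset.nonempty_range_add_one (fun s => g s y')) :
    ∃ t ≤ Fintype.card Y, ∀ y' : Y, c (y t) + Q (y t) ≤ c y' + Q y' :=
  stmt13_general c Q g y hvalid htight hmaster
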